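/- Let X be a finite connected simplicial complex and δ a cellular perversity, and let ≥ denote the order of Λ(X,δ). Then: (a) if Δ ↔ Δ′ and δ(Δ) ≥ δ(Δ′), then Δ ≥ Δ′, and moreover a connecting sequence Δ = Δ_0, …, Δ_r = Δ′ can be chosen with Δ ↔ Δ_i ↔ Δ′ for all i; (b) if Δ ≥ Δ′ and either δ(Δ) ≥ δ(Δ′) ≥ 0 or 0 ≥ δ(Δ) ≥ δ(Δ′), then Δ ↔ Δ′; (c) if Δ > Δ′ and Δ, Δ′ are not incident, then δ(Δ) > 0 and δ(Δ′) < 0, and if in addition δ(Δ) − δ(Δ′) = 2 then δ(Δ) = 1 and δ(Δ′) = −1 (Lemma 1.2.3). -/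
import Mathlib


/-- An abstract finite simplicial complex on a finite vertex type `V`. -/
structure SComplex (V : Type) [Fintype V] [DecidableEq V] where
  faces : Finset (Finset V)
  nonempty_of_mem : ∀ s ∈ faces, s.Nonempty
  down_closed : ∀ s ∈ faces, ∀ t, t ⊆ s → t.Nonempty → t ∈ faces

namespace SComplex

variable {V : Type} [Fintype V] [DecidableEq V]

def dime (Δ : Finset V) : ℕ := Δ.card - 1

/-- Two simplices are incident if one is a face of the other. -/
def Incident (Δ Δ' : Finset V) : Prop := Δ ⊆ Δ' ∨ Δ' ⊆ Δ

def Connected (K : SComplex V) : Prop :=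
  ∀ Δ ∈ K.faces, ∀ Δ' ∈ K.faces,
    Relation.ReflTransGen (fun s t => s ∈ K.faces ∧ t ∈ K.faces ∧ (s ∩ t).Nonempty) Δ Δ'

/-- A sequence `f 0, f 1, …, f r` of simplices of `K` in which consecutive members are
incident and have `w`-values decreasing by exactly `1`. -/
def IsLadder (K : SComplex V) (w : Finset V → ℤ) (f : ℕ → Finset V) (r : ℕ) : Prop :=
  (∀ i ≤ r, f i ∈ K.faces) ∧
  (∀ i < r, Incident (f i) (f (i + 1)) ∧ w (f i) = w (f (i + 1)) + 1)

/-- `Δ ≥ Δ'` in `Λ(X,δ)`: there is a connecting ladder from `Δ` down to `Δ'`. -/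
def lamGE (K : SComplex V) (w : Finset V → ℤ) (Δ Δ' : Finset V) : Prop :=
  ∃ (f : ℕ → Finset V) (r : ℕ), IsLadder K w f r ∧ f 0 = Δ ∧ f r = Δ'

end SComplex

open SComplex

/-- A cellular perversity. -/
structure CellPerversity where
  d : ℕ → ℤ
  zero : d 0 = 0
  step : ∀ k : ℕ, 1 ≤ k →
    ((∀ i < k, d i < d k) ∧ (∃ i < k, d k = d i + 1)) ∨
    ((∀ i < k, d k < d i) ∧ (∃ i < k, d k = d i - 1))

/-- The perversity of a simplex: `δ(Δ) = δ(dim Δ)`. -/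
def pd (P : CellPerversity) (Δ : Finset V) [Fintype V] [DecidableEq V] : ℤ := P.d (dime Δ)

namespace CellPerversity

lemma le_of_nonneg_le (P : CellPerversity) {j k : ℕ} (h0 : 0 ≤ P.d j) (h : P.d j ≤ P.d k) :
    j ≤ k := by
  by_contra hc
  push_neg at hc
  rcases P.step j (by omega) with ⟨hmax, _⟩ | ⟨hmin, _⟩
  · have := hmax k hc; omega
  · have := hmin 0 (by omega); have hz := P.zero; omega

lemma le_of_nonpos_le (P : CellPerversity) {j k : ℕ} (h0 : P.d j ≤ 0) (h : P.d k ≤ P.d j) :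
    j ≤ k := by
  by_contra hc
  push_neg at hc
  rcases P.step j (by omega) with ⟨hmax, _⟩ | ⟨hmin, _⟩
  · have := hmax 0 (by omega); have hz := P.zero; omega
  · have := hmin k hc; omega

lemma inj (P : CellPerversity) {j k : ℕ} (h : P.d j = P.d k) : j = k := by
  rcases lt_trichotomy j k with hlt | he | hlt
  · rcases P.step k (by omega) with ⟨hmax, _⟩ | ⟨hmin, _⟩
    · have := hmax j hlt; omega
    · have := hmin j hlt; omega
  · exact he
  · rcases P.step j (by omega) with ⟨hmax, _⟩ | ⟨hmin, _⟩
    · have := hmax k hlt; omega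
    · have := hmin k hlt; omega

lemma interval (P : CellPerversity) : ∀ n : ℕ, ∀ v : ℤ,
    (∃ i ≤ n, P.d i ≤ v) → (∃ j ≤ n, v ≤ P.d j) → ∃ m ≤ n, P.d m = v := by
  intro n
  induction n with
  | zero =>
    rintro v ⟨i, hi, h1⟩ ⟨j, hj, h2⟩
    have hi0 : i = 0 := Nat.le_zero.mp hi
    have hj0 : j = 0 := Nat.le_zero.mp hj
    subst hi0; subst hj0
    have hz := P.zero
    exact ⟨0, le_rfl, by omega⟩
  | succ n ih =>
    rintro v ⟨i, hi, h1⟩ ⟨j, hj, h2⟩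
    rcases P.step (n+1) (by omega) with ⟨hmax, i0, hi0, heq⟩ | ⟨hmin, i0, hi0, heq⟩
    · rcases lt_trichotomy v (P.d (n+1)) with hv | hv | hv
      · have hi' : i ≤ n := by
          by_cases h : i = n + 1
          · exfalso; rw [h] at h1; omega
          · omega
        obtain ⟨m, hm, hme⟩ := ih v ⟨i, hi', h1⟩ ⟨i0, by omega, by omega⟩
        exact ⟨m, by omega, hme⟩
      · exact ⟨n+1, le_rfl, hv.symm⟩
      · exfalso
        by_cases h : j = n + 1
        · rw [h] at h2; omega
        · have := hmax j (by omega); omega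
    · rcases lt_trichotomy v (P.d (n+1)) with hv | hv | hv
      · exfalso
        by_cases h : i = n + 1
        · rw [h] at h1; omega
        · have := hmin i (by omega); omega
      · exact ⟨n+1, le_rfl, hv.symm⟩
      · have hj' : j ≤ n := by
          by_cases h : j = n + 1
          · exfalso; rw [h] at h2; omega
          · omega
        obtain ⟨m, hm, hme⟩ := ih v ⟨i0, by omega, by omega⟩ ⟨j, hj', h2⟩
        exact ⟨m, by omega, hme⟩

end CellPerversity

namespace SComplex

variable {V : Type} [Fintype V] [DecidableEq V]

lemma subset_of_incident_of_card_le {s t : Finset V} (h : Incident s t)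
    (hc : t.card ≤ s.card) : t ⊆ s := by
  rcases h with h | h
  · rw [Finset.eq_of_subset_of_card_le h hc]
  · exact h

lemma exists_chain (S B : Finset V) (hSB : S ⊆ B) (hS : S.Nonempty) :
    ∃ C : ℕ → Finset V, (∀ k k', k ≤ k' → C k ⊆ C k') ∧
      (∀ k ≤ dime B, (C k).card = k + 1) ∧ C (dime S) = S ∧ C (dime B) = B := by
  classical
  set L : List V := S.toList ++ (B \ S).toList with hL
  have hdisj : S.toList.Disjoint (B \ S).toList := by
    intro a ha hb
    rw [Finset.mem_toList] at ha hb
    exact (Finset.mem_sdiff.mp hb).2 ha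
  have hnodup : L.Nodup := (S.nodup_toList).append (B \ S).nodup_toList hdisj
  have hScard : 0 < S.card := Finset.card_pos.mpr hS
  have hBcard : 0 < B.card := lt_of_lt_of_le hScard (Finset.card_le_card hSB)
  have hlen : L.length = B.card := by
    rw [hL, List.length_append, Finset.length_toList, Finset.length_toList,
      Finset.card_sdiff_of_subset hSB]
    have := Finset.card_le_card hSB
    omega
  refine ⟨fun k => (L.take (k+1)).toFinset, ?_, ?_, ?_, ?_⟩
  · intro k k' hk x hx
    rw [List.mem_toFinset] at hx ⊢
    have he : L.take (k+1) = (L.take (k'+1)).take (k+1) := by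
      rw [List.take_take]
      congr 1
      omega
    rw [he] at hx
    exact List.take_subset _ _ hx
  · intro k hk
    have hnd : (L.take (k+1)).Nodup := hnodup.sublist (List.take_sublist _ _)
    rw [List.card_toFinset, hnd.dedup, List.length_take]
    simp only [dime] at hk
    omega
  · have hcS : dime S + 1 = S.card := by simp only [dime]; omega
    show (List.take (dime S + 1) L).toFinset = S
    rw [hcS, hL, List.take_left' (Finset.length_toList S), Finset.toList_toFinset]
  · have hcB : dime B + 1 = B.card := by simp only [dime]; omega
    show (List.take (dime B + 1) L).toFinset = B
    rw [hcB, List.take_of_length_le (le_of_eq hlen), hL, List.toFinset_append,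
      Finset.toList_toFinset, Finset.toList_toFinset, Finset.union_sdiff_of_subset hSB]

lemma ladder_val (K : SComplex V) (w : Finset V → ℤ) (f : ℕ → Finset V) (r : ℕ)
    (h : IsLadder K w f r) : ∀ i ≤ r, w (f i) + i = w (f 0) := by
  intro i
  induction i with
  | zero => intro _; simp
  | succ i ih =>
    intro hi
    have h1 := (h.2 i (by omega)).2
    have h2 := ih (by omega)
    push_cast
    push_cast at h2
    omega

lemma step_subset_nonneg (K : SComplex V) (P : CellPerversity) {s t : Finset V}
    (hs : s ∈ K.faces) (ht : t ∈ K.faces) (hinc : Incident s t)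
    (hval : pd P s = pd P t + 1) (h0 : 0 ≤ pd P t) : t ⊆ s := by
  have e1 : pd P s = P.d (dime s) := rfl
  have e2 : pd P t = P.d (dime t) := rfl
  have hdim : dime t ≤ dime s := P.le_of_nonneg_le (by omega) (by omega)
  have hcs : 0 < s.card := Finset.card_pos.mpr (K.nonempty_of_mem s hs)
  have hct : 0 < t.card := Finset.card_pos.mpr (K.nonempty_of_mem t ht)
  have hcd : t.card ≤ s.card := by simp only [dime] at hdim; omega
  exact subset_of_incident_of_card_le hinc hcd

lemma step_subset_nonpos (K : SComplex V) (P : CellPerversity) {s t : Finset V}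
    (hs : s ∈ K.faces) (ht : t ∈ K.faces) (hinc : Incident s t)
    (hval : pd P s = pd P t + 1) (h0 : pd P s ≤ 0) : s ⊆ t := by
  have e1 : pd P s = P.d (dime s) := rfl
  have e2 : pd P t = P.d (dime t) := rfl
  have hdim : dime s ≤ dime t := P.le_of_nonpos_le (by omega) (by omega)
  have hcs : 0 < s.card := Finset.card_pos.mpr (K.nonempty_of_mem s hs)
  have hct : 0 < t.card := Finset.card_pos.mpr (K.nonempty_of_mem t ht)
  have hcd : s.card ≤ t.card := by simp only [dime] at hdim; omega
  exact subset_of_incident_of_card_le (Or.symm hinc) hcd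

lemma ladder_subset_nonneg (K : SComplex V) (P : CellPerversity) (w : Finset V → ℤ)
    (hw : ∀ s, w s = pd P s) (f : ℕ → Finset V) :
    ∀ r : ℕ, IsLadder K w f r → 0 ≤ w (f r) → f r ⊆ f 0 := by
  intro r
  induction r with
  | zero => intro _ _; exact subset_rfl
  | succ r ih =>
    intro h h0
    have hr : IsLadder K w f r :=
      ⟨fun i hi => h.1 i (by omega), fun i hi => h.2 i (by omega)⟩
    have hstep := (h.2 r (by omega)).2
    have h0' : 0 ≤ w (f r) := by omega
    have hsub : f (r+1) ⊆ f r := by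
      refine step_subset_nonneg K P (h.1 r (by omega)) (h.1 (r+1) (by omega))
        ((h.2 r (by omega)).1) ?_ ?_
      · rw [← hw, ← hw]; exact hstep
      · rw [← hw]; exact h0
    exact hsub.trans (ih hr h0')

lemma ladder_subset_nonpos (K : SComplex V) (P : CellPerversity) (w : Finset V → ℤ)
    (hw : ∀ s, w s = pd P s) (f : ℕ → Finset V) :
    ∀ r : ℕ, IsLadder K w f r → w (f 0) ≤ 0 → f 0 ⊆ f r := by
  intro r
  induction r with
  | zero => intro _ _; exact subset_rfl
  | succ r ih =>
    intro h h0
    have hr : IsLadder K w f r :=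
      ⟨fun i hi => h.1 i (by omega), fun i hi => h.2 i (by omega)⟩
    have hval := ladder_val K w f (r+1) h r (by omega)
    have h0' : w (f r) ≤ 0 := by omega
    have hsub : f r ⊆ f (r+1) := by
      refine step_subset_nonpos K P (h.1 r (by omega)) (h.1 (r+1) (by omega))
        ((h.2 r (by omega)).1) ?_ ?_
      · rw [← hw, ← hw]; exact (h.2 r (by omega)).2
      · rw [← hw]; exact h0'
    exact (ih hr h0).trans hsub

lemma part_a (K : SComplex V) (P : CellPerversity) (w : Finset V → ℤ)
    (hw : ∀ s, w s = pd P s) {Δ Δ' : Finset V}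
    (hΔ : Δ ∈ K.faces) (hΔ' : Δ' ∈ K.faces) (hinc : Incident Δ Δ')
    (hle : pd P Δ' ≤ pd P Δ) :
    ∃ (f : ℕ → Finset V) (r : ℕ), IsLadder K w f r ∧ f 0 = Δ ∧ f r = Δ' ∧
      ∀ i ≤ r, Incident Δ (f i) ∧ Incident (f i) Δ' := by
  classical
  set S := Δ ∩ Δ' with hSdef
  set B := Δ ∪ Δ' with hBdef
  have hSB : (S = Δ ∧ B = Δ') ∨ (S = Δ' ∧ B = Δ) := by
    rcases hinc with h | h
    · exact Or.inl ⟨Finset.inter_eq_left.mpr h, Finset.union_eq_right.mpr h⟩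
    · exact Or.inr ⟨Finset.inter_eq_right.mpr h, Finset.union_eq_left.mpr h⟩
  have hSsub : S ⊆ B := Finset.inter_subset_union
  have hB : B ∈ K.faces := by rcases hSB with ⟨_, h⟩ | ⟨_, h⟩ <;> rw [h] <;> assumption
  have hSne : S.Nonempty := by
    rcases hSB with ⟨h, _⟩ | ⟨h, _⟩ <;> rw [h]
    · exact K.nonempty_of_mem Δ hΔ
    · exact K.nonempty_of_mem Δ' hΔ'
  have hdm : ∀ X Y : Finset V, X ⊆ Y → dime X ≤ dime Y := by
    intro X Y h
    exact Nat.sub_le_sub_right (Finset.card_le_card h) 1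
  have hpB : dime Δ ≤ dime B := hdm _ _ Finset.subset_union_left
  have hqB : dime Δ' ≤ dime B := hdm _ _ Finset.subset_union_right
  obtain ⟨C, hmono, hcard, hCS, hCB⟩ := exists_chain S B hSsub hSne
  have hBcard : 0 < B.card := Finset.card_pos.mpr (K.nonempty_of_mem B hB)
  have hCfaces : ∀ k ≤ dime B, C k ∈ K.faces := by
    intro k hk
    refine K.down_closed B hB _ ?_ ?_
    · have := hmono k (dime B) hk
      rwa [hCB] at this
    · apply Finset.card_pos.mp
      rw [hcard k hk]
      omega
  have hdimeC : ∀ k ≤ dime B, dime (C k) = k := by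
    intro k hk
    simp only [dime, hcard k hk]
    omega
  have hCp : C (dime Δ) = Δ := by
    rcases hSB with ⟨h1, h2⟩ | ⟨h1, h2⟩
    · rw [← h1]; exact hCS
    · rw [← h2]; exact hCB
  have hCq : C (dime Δ') = Δ' := by
    rcases hSB with ⟨h1, h2⟩ | ⟨h1, h2⟩
    · rw [← h2]; exact hCB
    · rw [← h1]; exact hCS
  have key : ∀ X : Finset V, C (dime X) = X → ∀ k, Incident X (C k) ∧ Incident (C k) X := by
    intro X hX k
    rcases le_total k (dime X) with h | h
    · have hsub : C k ⊆ X := by have := hmono k (dime X) h; rwa [hX] at this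
      exact ⟨Or.inr hsub, Or.inl hsub⟩
    · have hsub : X ⊆ C k := by have := hmono (dime X) k h; rwa [hX] at this
      exact ⟨Or.inl hsub, Or.inr hsub⟩
  set r : ℕ := (pd P Δ - pd P Δ').toNat with hrdef
  have hr : (r : ℤ) = pd P Δ - pd P Δ' := Int.toNat_of_nonneg (by omega)
  have hpq : pd P Δ = P.d (dime Δ) := rfl
  have hpq' : pd P Δ' = P.d (dime Δ') := rfl
  have hm : ∀ i : ℕ, ∃ k, k ≤ dime B ∧ (i ≤ r → P.d k = pd P Δ - i) := by
    intro i
    by_cases hi : i ≤ r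
    · have hi' : (i : ℤ) ≤ (r : ℤ) := by exact_mod_cast hi
      obtain ⟨m, hm1, hm2⟩ := P.interval (dime B) (pd P Δ - i)
        ⟨dime Δ', hqB, by omega⟩ ⟨dime Δ, hpB, by omega⟩
      exact ⟨m, hm1, fun _ => hm2⟩
    · exact ⟨0, Nat.zero_le _, fun h => absurd h hi⟩
  choose m hm1 hm2 using hm
  refine ⟨fun i => C (m i), r, ⟨?_, ?_⟩, ?_, ?_, ?_⟩
  · intro i _
    exact hCfaces (m i) (hm1 i)
  · intro i hi
    constructor
    · rcases le_total (m i) (m (i+1)) with h | h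
      · exact Or.inl (hmono _ _ h)
      · exact Or.inr (hmono _ _ h)
    · have e1 : w (C (m i)) = P.d (m i) := by
        rw [hw]
        show P.d (dime (C (m i))) = P.d (m i)
        rw [hdimeC _ (hm1 i)]
      have e2 : w (C (m (i+1))) = P.d (m (i+1)) := by
        rw [hw]
        show P.d (dime (C (m (i+1)))) = P.d (m (i+1))
        rw [hdimeC _ (hm1 (i+1))]
      have v1 := hm2 i (by omega)
      have v2 := hm2 (i+1) (by omega)
      rw [e1, e2, v1, v2]
      push_cast
      ring
  · have v0 := hm2 0 (Nat.zero_le r)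
    have : m 0 = dime Δ := by
      apply P.inj
      rw [v0]
      push_cast
      omega
    show C (m 0) = Δ
    rw [this, hCp]
  · have vr := hm2 r le_rfl
    have : m r = dime Δ' := by
      apply P.inj
      rw [vr]
      omega
    show C (m r) = Δ'
    rw [this, hCq]
  · intro i _
    exact ⟨(key Δ hCp (m i)).1, (key Δ' hCq (m i)).2⟩

end SComplex

/-- Lemma 1.2.3.  Let `X` be a finite connected simplicial complex, `δ` a cellular
perversity, and `≥` the order of `Λ(X,δ)`.
(a) If `Δ ↔ Δ'` and `δ(Δ) ≥ δ(Δ')`, then `Δ ≥ Δ'`, and a connecting sequence can be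
chosen with `Δ ↔ Δᵢ ↔ Δ'` for all `i`;
(b) if `Δ ≥ Δ'` and either `δ(Δ) ≥ δ(Δ') ≥ 0` or `0 ≥ δ(Δ) ≥ δ(Δ')`, then `Δ ↔ Δ'`;
(c) if `Δ > Δ'` and `Δ`, `Δ'` are not incident, then `δ(Δ) > 0` and `δ(Δ') < 0`, and if
in addition `δ(Δ) − δ(Δ') = 2` then `δ(Δ) = 1` and `δ(Δ') = −1`. -/
theorem statement9 {V : Type} [Fintype V] [DecidableEq V]
    (K : SComplex V) (hne : K.faces.Nonempty) (hconn : K.Connected)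
    (P : CellPerversity) (w : Finset V → ℤ) (hw : w = fun Δ => pd P Δ) :
    -- (a)
    (∀ Δ ∈ K.faces, ∀ Δ' ∈ K.faces, Incident Δ Δ' → pd P Δ' ≤ pd P Δ →
      lamGE K w Δ Δ' ∧
      ∃ (f : ℕ → Finset V) (r : ℕ), IsLadder K w f r ∧ f 0 = Δ ∧ f r = Δ' ∧
        ∀ i ≤ r, Incident Δ (f i) ∧ Incident (f i) Δ') ∧
    -- (b)
    (∀ Δ Δ' : Finset V, lamGE K w Δ Δ' →
      ((0 ≤ pd P Δ' ∧ pd P Δ' ≤ pd P Δ) ∨ (pd P Δ ≤ 0 ∧ pd P Δ' ≤ pd P Δ)) →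
      Incident Δ Δ') ∧
    -- (c)
    (∀ Δ Δ' : Finset V, lamGE K w Δ Δ' → Δ ≠ Δ' → ¬ Incident Δ Δ' →
      (0 < pd P Δ ∧ pd P Δ' < 0) ∧
      (pd P Δ - pd P Δ' = 2 → pd P Δ = 1 ∧ pd P Δ' = -1)) := by
  have hw' : ∀ s, w s = pd P s := fun s => by rw [hw]
  refine ⟨?_, ?_, ?_⟩
  · intro Δ hΔ Δ' hΔ' hinc hle
    obtain ⟨f, r, hlad, hf0, hfr, hmid⟩ :=
      SComplex.part_a K P w hw' hΔ hΔ' hinc hle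
    exact ⟨⟨f, r, hlad, hf0, hfr⟩, f, r, hlad, hf0, hfr, hmid⟩
  · rintro Δ Δ' ⟨f, r, hlad, hf0, hfr⟩ hcase
    rcases hcase with ⟨h1, _⟩ | ⟨h1, _⟩
    · refine Or.inr ?_
      rw [← hf0, ← hfr]
      exact SComplex.ladder_subset_nonneg K P w hw' f r hlad
        (by rw [hw' (f r), hfr]; exact h1)
    · refine Or.inl ?_
      rw [← hf0, ← hfr]
      exact SComplex.ladder_subset_nonpos K P w hw' f r hlad
        (by rw [hw' (f 0), hf0]; exact h1)
  · rintro Δ Δ' ⟨f, r, hlad, hf0, hfr⟩ hne' hninc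
    have hval := SComplex.ladder_val K w f r hlad r le_rfl
    have hge : pd P Δ' ≤ pd P Δ := by
      rw [← hf0, ← hfr, ← hw' (f 0), ← hw' (f r)]
      omega
    have hp : 0 < pd P Δ := by
      by_contra hc
      push_neg at hc
      apply hninc
      refine Or.inl ?_
      rw [← hf0, ← hfr]
      exact SComplex.ladder_subset_nonpos K P w hw' f r hlad
        (by rw [hw' (f 0), hf0]; exact hc)
    have hq : pd P Δ' < 0 := by
      by_contra hc
      push_neg at hc
      apply hninc
      refine Or.inr ?_
      rw [← hf0, ← hfr]
      exact SComplex.ladder_subset_nonneg K P w hw' f r hlad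
        (by rw [hw' (f r), hfr]; exact hc)
    exact ⟨⟨hp, hq⟩, fun h2 => by omega⟩
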